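/- For every n ≥ 1, σ(μ_n) = q · Q^{1−n} · μ_n in K (i.e., μ_n(q^{−1}) = q^{1−(n−1)ν} μ_n(q)). -/

import Mathlib

/- Let `K` be the fraction field of `ℚ[q,Q]`, where `Q` plays the role of `q^ν`.
`θν` and `θν1` are the series `θ_ν` and `θ_{ν+1}` of the Hahn–Exton `q`-Bessel
functions, and `μ n` are the coefficients of `θ_{ν+1}/θ_ν`. -/

noncomputable section

abbrev K : Type := FractionRing (MvPolynomial (Fin 2) ℚ)

def qv : K := algebraMap (MvPolynomial (Fin 2) ℚ) K (MvPolynomial.X 0)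

def Qv : K := algebraMap (MvPolynomial (Fin 2) ℚ) K (MvPolynomial.X 1)

/-- The q-Pochhammer symbol `(a;q)_n`. -/
def qPoch (a : K) (n : ℕ) : K := ∏ j ∈ Finset.range n, (1 - a * qv ^ j)

/-- `[ν+k]_q = (1 - Q q^k)/(1-q)`. -/
def brk (k : ℕ) : K := (1 - Qv * qv ^ k) / (1 - qv)

/-- `[ν]_q = (1 - Q)/(1-q)`. -/
def brNu : K := (1 - Qv) / (1 - qv)

/-- `θ_ν(x)`. -/
def θν : PowerSeries K :=
  PowerSeries.mk fun n =>
    (-1) ^ n * qv ^ (n * (n - 1) / 2) * Qv ^ n * (1 - qv) ^ (2 * n)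
      / (qPoch qv n * qPoch (Qv * qv) n)

/-- `θ_{ν+1}(x)`, i.e. `θ_ν` with `Q` replaced by `Qq`. -/
def θν1 : PowerSeries K :=
  PowerSeries.mk fun n =>
    (-1) ^ n * qv ^ (n * (n - 1) / 2) * (Qv * qv) ^ n * (1 - qv) ^ (2 * n)
      / (qPoch qv n * qPoch (Qv * qv ^ 2) n)

/-- The coefficients `μ_n` of `θ_{ν+1}(x)/θ_ν(x)`. -/
def μ (n : ℕ) : K := PowerSeries.coeff n (θν1 * θν⁻¹)

/- Write `θ(a) := ∑ₙ (-1)ⁿ q^{n(n-1)/2} aⁿ (1-q)^{2n} xⁿ / ((q;q)ₙ (aq;q)ₙ)`, so that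
`θ_ν = θ(Q)` and `θ_{ν+1} = θ(Qq)`. If `σ a = a⁻¹`, then
`σ (a;q)ₙ = (a⁻¹;q⁻¹)ₙ = ((-a)ⁿ q^{n(n-1)/2})⁻¹ (a;q)ₙ`, hence `σ` acts on the coefficients of
`θ(a)` as the substitution `x ↦ x/a`. The contiguity relation
`θ(aq)(x/q) = aq θ(aq)(x) + (1 - aq) θ(a)(x)`, which comes from
`(1-aq)(aq²;q)ₙ = (1-aq^{n+1})(aq;q)ₙ`, then gives
`σ(θ(aq)/θ(a))(x) = aq (θ(aq)/θ(a))(x/a) + 1 - aq`; for `a = Q` compare coefficients of `xⁿ`. -/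

open PowerSeries

lemma qv_ne_zero : qv ≠ 0 :=
  (map_ne_zero_iff _ (IsFractionRing.injective _ K)).mpr (MvPolynomial.X_ne_zero 0)

lemma Qv_ne_zero : Qv ≠ 0 :=
  (map_ne_zero_iff _ (IsFractionRing.injective _ K)).mpr (MvPolynomial.X_ne_zero 1)

lemma one_sub_algebraMap_ne_zero {p : MvPolynomial (Fin 2) ℚ}
    (hp : MvPolynomial.constantCoeff p = 0) :
    (1 : K) - algebraMap (MvPolynomial (Fin 2) ℚ) K p ≠ 0 := by
  rw [sub_ne_zero, ← map_one (algebraMap (MvPolynomial (Fin 2) ℚ) K), Ne,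
    (IsFractionRing.injective _ K).eq_iff]
  rintro rfl
  simp at hp

lemma one_sub_qv_mul_qv_pow_ne_zero (k : ℕ) : 1 - qv * qv ^ k ≠ 0 := by
  have h := one_sub_algebraMap_ne_zero (p := MvPolynomial.X 0 * MvPolynomial.X 0 ^ k) (by simp)
  rwa [map_mul, map_pow] at h

lemma one_sub_Qv_mul_qv_pow_ne_zero (k : ℕ) : 1 - Qv * qv ^ k ≠ 0 := by
  have h := one_sub_algebraMap_ne_zero (p := MvPolynomial.X 1 * MvPolynomial.X 0 ^ k) (by simp)
  rwa [map_mul, map_pow] at h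

lemma qPoch_succ (a : K) (n : ℕ) : qPoch a (n + 1) = qPoch a n * (1 - a * qv ^ n) :=
  Finset.prod_range_succ _ _

lemma qPoch_succ' (a : K) (n : ℕ) : qPoch a (n + 1) = (1 - a) * qPoch (a * qv) n := by
  simp only [qPoch, Finset.prod_range_succ', pow_succ, pow_zero, mul_one, mul_assoc, mul_comm]

lemma qPoch_ne_zero {a : K} (hpoch : ∀ k, 1 - a * qv ^ k ≠ 0) (n : ℕ) : qPoch a n ≠ 0 :=
  Finset.prod_ne_zero_iff.mpr fun k _ => hpoch k

def thetaCoeff (a : K) (n : ℕ) : K :=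
  (-1) ^ n * qv ^ (n * (n - 1) / 2) * a ^ n * (1 - qv) ^ (2 * n)
    / (qPoch qv n * qPoch (a * qv) n)

def thetaSeries (a : K) : K⟦X⟧ := mk (thetaCoeff a)

lemma θν_eq_thetaSeries : θν = thetaSeries Qv := rfl

lemma θν1_eq_thetaSeries : θν1 = thetaSeries (Qv * qv) := by
  unfold θν1 thetaSeries thetaCoeff
  rw [mul_assoc Qv qv qv, ← sq]

lemma constantCoeff_thetaSeries (a : K) : constantCoeff (thetaSeries a) = 1 := by
  simp [thetaSeries, thetaCoeff, qPoch]

lemma thetaCoeff_contiguous {a : K} (hpoch : ∀ k, 1 - a * qv ^ k ≠ 0) (n : ℕ) :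
    (qv ^ n)⁻¹ * thetaCoeff (a * qv) n
      = a * qv * thetaCoeff (a * qv) n + (1 - a * qv) * thetaCoeff a n := by
  have hpoch_mul (j : ℕ) : ∀ k, 1 - a * qv ^ j * qv ^ k ≠ 0 := fun k => by
    rw [mul_assoc, ← pow_add]
    exact hpoch _
  have h₀ := qPoch_ne_zero one_sub_qv_mul_qv_pow_ne_zero n
  have h₁ := qPoch_ne_zero (hpoch_mul 1) n
  have h₂ := qPoch_ne_zero (hpoch_mul 2) n
  have hshift := (qPoch_succ (a * qv) n).symm.trans (qPoch_succ' (a * qv) n)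
  rw [pow_one] at h₁
  rw [mul_assoc a qv qv, ← sq] at hshift
  unfold thetaCoeff
  field_simp [qv_ne_zero]
  linear_combination (1 - qv) ^ (2 * n) * (a * qv) ^ n * hshift

lemma rescale_thetaSeries_contiguous {a : K} (hpoch : ∀ k, 1 - a * qv ^ k ≠ 0) :
    rescale qv⁻¹ (thetaSeries (a * qv))
      = C (a * qv) * thetaSeries (a * qv) + C (1 - a * qv) * thetaSeries a := by
  ext n
  simp only [coeff_rescale, map_add, coeff_C_mul, thetaSeries, coeff_mk, inv_pow]
  exact thetaCoeff_contiguous hpoch n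

section Inversion

variable {σ : K ≃+* K} (hq : σ qv = qv⁻¹)
include hq

lemma map_qPoch {a : K} (ha0 : a ≠ 0) (ha : σ a = a⁻¹) (n : ℕ) :
    σ (qPoch a n) = ((-a) ^ n * qv ^ (n * (n - 1) / 2))⁻¹ * qPoch a n := by
  have factor (j : ℕ) : σ (1 - a * qv ^ j) = (-a * qv ^ j)⁻¹ * (1 - a * qv ^ j) := by
    have : a * qv ^ j ≠ 0 := mul_ne_zero ha0 (pow_ne_zero _ qv_ne_zero)
    rw [map_sub, map_one, map_mul, map_pow, ha, hq, inv_pow, ← mul_inv, neg_mul]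
    generalize a * qv ^ j = x at this ⊢
    field_simp
    ring
  rw [qPoch, map_prod, Finset.prod_congr rfl fun j _ => factor j, Finset.prod_mul_distrib,
    Finset.prod_inv_distrib, Finset.prod_mul_distrib, Finset.prod_const, Finset.card_range,
    Finset.prod_pow_eq_pow_sum, Finset.sum_range_id]

lemma map_thetaCoeff {a : K} (ha0 : a ≠ 0) (ha : σ a = a⁻¹) (n : ℕ) :
    σ (thetaCoeff a n) = (a ^ n)⁻¹ * thetaCoeff a n := by
  have hq0 := qv_ne_zero
  rw [thetaCoeff, map_div₀, map_mul σ (qPoch _ _), map_qPoch hq hq0 hq,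
    map_qPoch hq (mul_ne_zero ha0 hq0) (by rw [map_mul, ha, hq, mul_inv])]
  have h : (1 - qv⁻¹) ^ 2 = (qv ^ 2)⁻¹ * (1 - qv) ^ 2 := by field_simp; ring
  simp only [map_mul, map_pow, map_neg, map_one, map_sub, ha, hq, pow_mul, h, mul_pow, inv_pow]
  generalize n * (n - 1) / 2 = T
  field_simp
  rw [mul_assoc (((1 - qv) ^ 2) ^ n), ← mul_pow, neg_mul_neg]
  ring

lemma map_thetaSeries {a : K} (ha0 : a ≠ 0) (ha : σ a = a⁻¹) :
    map (σ : K →+* K) (thetaSeries a) = rescale a⁻¹ (thetaSeries a) := by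
  ext n
  simp only [coeff_map, coeff_rescale, thetaSeries, coeff_mk, inv_pow]
  exact map_thetaCoeff hq ha0 ha n

lemma map_thetaSeries_ratio {a : K} (ha0 : a ≠ 0) (ha : σ a = a⁻¹)
    (hpoch : ∀ k, 1 - a * qv ^ k ≠ 0) :
    map (σ : K →+* K) (thetaSeries (a * qv) * (thetaSeries a)⁻¹)
      = rescale a⁻¹ (C (a * qv) * (thetaSeries (a * qv) * (thetaSeries a)⁻¹) + C (1 - a * qv)) := by
  set f := thetaSeries (a * qv) * (thetaSeries a)⁻¹
  have hf : f * thetaSeries a = thetaSeries (a * qv) := by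
    rw [mul_assoc, PowerSeries.inv_mul_cancel _ (by simp [constantCoeff_thetaSeries]), mul_one]
  have hσaq : σ (a * qv) = (a * qv)⁻¹ := by rw [map_mul, ha, hq, mul_inv]
  have hg : rescale a⁻¹ (thetaSeries a) ≠ 0 := fun h => by
    have h0 := congrArg (coeff 0) h
    rw [coeff_rescale, pow_zero, one_mul, coeff_zero_eq_constantCoeff, constantCoeff_thetaSeries,
      map_zero] at h0
    exact one_ne_zero h0
  refine mul_right_cancel₀ hg ?_
  calc map (σ : K →+* K) f * rescale a⁻¹ (thetaSeries a)
      = map (σ : K →+* K) (thetaSeries (a * qv)) := by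
        rw [← map_thetaSeries hq ha0 ha, ← map_mul, hf]
    _ = rescale a⁻¹ (rescale qv⁻¹ (thetaSeries (a * qv))) := by
        rw [map_thetaSeries hq (mul_ne_zero ha0 qv_ne_zero) hσaq, rescale_rescale, mul_inv_rev]
    _ = rescale a⁻¹ (C (a * qv) * f + C (1 - a * qv)) * rescale a⁻¹ (thetaSeries a) := by
        rw [rescale_thetaSeries_contiguous hpoch, ← map_mul, add_mul, mul_assoc, hf]

end Inversion

/-- Proposition 2.6: `μ_n(q⁻¹) = q^{1-(n-1)ν} μ_n(q)`, i.e. `σ(μ_n) = q Q^{1-n} μ_n`,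
where `σ` is the field automorphism of `K` determined by `σ(q) = q⁻¹`, `σ(Q) = Q⁻¹`. -/
theorem sigma_mu_eq (σ : K ≃+* K) (hq : σ qv = qv⁻¹) (hQ : σ Qv = Qv⁻¹) :
    ∀ n : ℕ, 1 ≤ n → σ (μ n) = qv * Qv ^ (1 - (n : ℤ)) * μ n := by
  intro n hn
  have hμ := congrArg (coeff n)
    (map_thetaSeries_ratio hq Qv_ne_zero hQ one_sub_Qv_mul_qv_pow_ne_zero)
  rw [← θν_eq_thetaSeries, ← θν1_eq_thetaSeries, coeff_map, coeff_rescale, map_add,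
    coeff_C_mul, coeff_C, if_neg (by omega), add_zero, RingEquiv.coe_toRingHom] at hμ
  rw [μ, hμ, inv_pow, zpow_sub₀ Qv_ne_zero, zpow_one, zpow_natCast]
  field_simp [Qv_ne_zero]

end
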